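/- Let m ≥ 1 and let α⁽ⁱ⁾, α⁽ʲ⁾ ∈ ℂ with α⁽ⁱ⁾ ≠ α⁽ʲ⁾. Let v, vⁱ, vʲ : ℤ → ℂ be nowhere-vanishing functions satisfying, for all n ∈ ℤ, (vⁱ(n+m) − v(n))·∏_{s=0}^{m−1} vⁱ(n+s) = α⁽ⁱ⁾·(v(n+m) − vⁱ(n))·∏_{s=0}^{m−1} v(n+s) and (vʲ(n+m) − v(n))·∏_{s=0}^{m−1} vʲ(n+s) = α⁽ʲ⁾·(v(n+m) − vʲ(n))·∏_{s=0}^{m−1} v(n+s). For s = 0,…,m define P_s(n) = (α⁽ⁱ⁾·∏_{r=0}^{m−1} vʲ(n+r) − α⁽ʲ⁾·∏_{r=0}^{m−1} vⁱ(n+r))·∏_{r=0}^{m−1} v(n+r) + Σ_{r=0}^{m−1} γ_{r,s}·(∏_{t=r+1}^{m−1} v(n+t))²·v(n+r)·(vⁱ(n+r) − vʲ(n+r))·(∏_{t=0}^{r−1} vⁱ(n+t))·(∏_{t=0}^{r−1} vʲ(n+t)), where γ_{r,s} = 1 if s ≤ r and γ_{r,s} = α⁽ⁱ⁾·α⁽ʲ⁾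 if r < s, and assume P_s(n) ≠ 0 for all s and n. Then: (a) for all n ∈ ℤ and 0 ≤ s ≤ m−2, P_{s+2}(n)·P_s(n+1) = P_{s+1}(n)·P_{s+1}(n+1), so that the function v^{ij}(n) := v(n)·P_1(n)/P_0(n) satisfies v^{ij}(n+s) = v(n+s)·P_{s+1}(n)/P_s(n) for s = 0,…,m−1; and (b) v^{ij} satisfies, for all n ∈ ℤ, (v^{ij}(n+m) − vʲ(n))·∏_{s=0}^{m−1} v^{ij}(n+s) = α⁽ⁱ⁾·(vʲ(n+m) − v^{ij}(n))·∏_{s=0}^{m−1} vʲ(n+s) and (v^{ij}(n+m) − vⁱ(n))·∏_{s=0}^{m−1} v^{ij}(n+s) = α⁽ʲ⁾·(vⁱ(n+m) − v^{ij}(n))·∏_{s=0}^{m−1} vⁱ(n+s). -/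

import Mathlib

/-!
Write `P_s = (αⁱ J - αʲ I) A + ∑_r γ_{r,s} T_r`, where `A, I, J` are the products of `m`
consecutive values of `v, vⁱ, vʲ`. Shifting `n` by one turns `T_{r+1}(n)` into `T_r(n+1)` up to
the factor `vⁱ vʲ / v_m²`, and the two boundary terms `T_0(n)`, `T_{m-1}(n+1)` are absorbed by the
two m-quad-equations. This gives `v_m² P_{s+1}(n) = vⁱ vʲ P_s(n+1)` for `s < m`, with an explicit
defect at `s = m`. The bilinear relations (a), hence the ratio formula for `v^{ij}`, follow at once;
the product of `v^{ij}` over a window telescopes to `A P_m / P_0`, and the quad equation for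
`(vʲ, v^{ij})` reduces to a polynomial identity between `P_0, P_1, P_m(n), P_m(n+1)`.
Since `P` changes sign under `i ↔ j`, the other quad equation is the same statement.
-/

open Finset

section WindowProd

variable {M : Type*} [CommMonoid M] (f : ℤ → M)

def windowProd (m : ℕ) (n : ℤ) : M := ∏ r ∈ range m, f (n + r)

lemma windowProd_succ (m : ℕ) (n : ℤ) : windowProd f (m + 1) n = windowProd f m n * f (n + m) :=
  prod_range_succ _ _

lemma windowProd_succ' (m : ℕ) (n : ℤ) : windowProd f (m + 1) n = f n * windowProd f m (n + 1) := by
  rw [windowProd, prod_range_succ', mul_comm, Nat.cast_zero, add_zero]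
  congr 1
  exact prod_congr rfl fun r _ => by push_cast; ring_nf

lemma mul_windowProd_add_one (m : ℕ) (n : ℤ) :
    f n * windowProd f m (n + 1) = windowProd f m n * f (n + m) := by
  rw [← windowProd_succ', windowProd_succ]

lemma prod_Ico_add_one_eq_mul {r m : ℕ} (h : r + 2 ≤ m) (n : ℤ) :
    ∏ t ∈ Ico (r + 1) m, f (n + 1 + t) = (∏ t ∈ Ico (r + 2) m, f (n + t)) * f (n + m) := by
  rw [← prod_Ico_succ_top h (fun t : ℕ => f (n + t)), ← prod_Ico_add' _ (r + 1) m 1]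
  exact prod_congr rfl fun t _ => by push_cast; ring_nf

end WindowProd

section Polynomials

variable {R : Type*} [CommRing R] (m : ℕ) (αi αj : R) (v vi vj : ℤ → R)

def dSKQuad (α : R) (u w : ℤ → R) (n : ℤ) : Prop :=
  (w (n + m) - u n) * windowProd w m n = α * (u (n + m) - w n) * windowProd u m n

def dSKCoeff (s r : ℕ) : R := if s ≤ r then 1 else αi * αj

def dSKTerm (r : ℕ) (n : ℤ) : R :=
  (∏ t ∈ Ico (r + 1) m, v (n + t)) ^ 2 * v (n + r) * (vi (n + r) - vj (n + r))
    * windowProd vi r n * windowProd vj r n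

def dSKPoly (s : ℕ) (n : ℤ) : R :=
  (αi * windowProd vj m n - αj * windowProd vi m n) * windowProd v m n
    + ∑ r ∈ range m, dSKCoeff αi αj s r * dSKTerm m v vi vj r n

variable {αi αj} in
lemma dSKCoeff_of_le {s r : ℕ} (h : s ≤ r) : dSKCoeff αi αj s r = 1 := if_pos h

variable {αi αj} in
lemma dSKCoeff_of_lt {s r : ℕ} (h : r < s) : dSKCoeff αi αj s r = αi * αj := if_neg (by omega)

lemma dSKCoeff_succ_succ (s r : ℕ) : dSKCoeff αi αj (s + 1) (r + 1) = dSKCoeff αi αj s r := by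
  simp only [dSKCoeff, Nat.add_le_add_iff_right]

lemma dSKTerm_swap (r : ℕ) (n : ℤ) : dSKTerm m v vj vi r n = -dSKTerm m v vi vj r n := by
  unfold dSKTerm; ring

lemma dSKPoly_swap (s : ℕ) (n : ℤ) :
    dSKPoly m αj αi v vj vi s n = -dSKPoly m αi αj v vi vj s n := by
  simp only [dSKPoly, dSKCoeff, dSKTerm_swap m v vj vi, mul_comm αj αi, mul_neg, sum_neg_distrib]
  ring

lemma dSKPoly_of_le {s : ℕ} (hs : m ≤ s) (n : ℤ) :
    dSKPoly m αi αj v vi vj s n = dSKPoly m αi αj v vi vj m n := by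
  unfold dSKPoly
  congr 1
  refine sum_congr rfl fun r hr => ?_
  have hr := mem_range.mp hr
  rw [dSKCoeff_of_lt (by omega), dSKCoeff_of_lt hr]

lemma dSKPoly_sub_mul_dSKPoly_zero (n : ℤ) :
    dSKPoly m αi αj v vi vj m n - αi * αj * dSKPoly m αi αj v vi vj 0 n
      = (1 - αi * αj) * (αi * windowProd vj m n - αj * windowProd vi m n) * windowProd v m n := by
  have hsum : ∑ r ∈ range m, dSKCoeff αi αj m r * dSKTerm m v vi vj r n
      = αi * αj * ∑ r ∈ range m, dSKCoeff αi αj 0 r * dSKTerm m v vi vj r n := by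
    rw [mul_sum]
    refine sum_congr rfl fun r hr => ?_
    rw [dSKCoeff_of_lt (mem_range.mp hr), dSKCoeff_of_le r.zero_le, one_mul]
  rw [dSKPoly, dSKPoly, hsum]
  ring

lemma dSKTerm_succ {r : ℕ} (hr : r + 2 ≤ m) (n : ℤ) :
    v (n + m) ^ 2 * dSKTerm m v vi vj (r + 1) n = vi n * vj n * dSKTerm m v vi vj r (n + 1) := by
  unfold dSKTerm
  rw [prod_Ico_add_one_eq_mul v hr, windowProd_succ' vi, windowProd_succ' vj]
  have e : ∀ f : ℤ → R, f (n + ((r + 1 : ℕ) : ℤ)) = f (n + 1 + r) := fun f => by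
    push_cast; ring_nf
  rw [e v, e vi, e vj]
  ring

variable (k : ℕ)

lemma dSKTerm_zero (n : ℤ) :
    v n * dSKTerm (k + 1) v vi vj 0 n = windowProd v (k + 1) n ^ 2 * (vi n - vj n) := by
  have e : ∏ t ∈ Ico 1 (k + 1), v (n + t) = windowProd v k (n + 1) := by
    rw [prod_Ico_eq_prod_range, Nat.add_sub_cancel, windowProd]
    exact prod_congr rfl fun t _ => by push_cast; ring_nf
  rw [dSKTerm, windowProd_succ' v, zero_add, e]
  simp only [windowProd, range_zero, prod_empty, Nat.cast_zero, add_zero]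
  ring

lemma dSKTerm_last (n : ℤ) :
    vi n * vj n * dSKTerm (k + 1) v vi vj k (n + 1)
      = v (n + (k + 1 : ℕ)) * (vi (n + (k + 1 : ℕ)) - vj (n + (k + 1 : ℕ)))
          * windowProd vi (k + 1) n * windowProd vj (k + 1) n := by
  rw [dSKTerm, windowProd_succ vi, windowProd_succ vj, ← mul_windowProd_add_one vi,
    ← mul_windowProd_add_one vj, Ico_self, prod_empty]
  have e : n + 1 + k = n + (k + 1 : ℕ) := by push_cast; ring
  rw [e]
  ring

lemma sum_dSKTerm_shift (s : ℕ) (n : ℤ) :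
    v (n + (k + 1 : ℕ)) ^ 2
        * ∑ r ∈ range (k + 1), dSKCoeff αi αj (s + 1) r * dSKTerm (k + 1) v vi vj r n
      + dSKCoeff αi αj s k * (vi n * vj n * dSKTerm (k + 1) v vi vj k (n + 1))
      = αi * αj * v (n + (k + 1 : ℕ)) ^ 2 * dSKTerm (k + 1) v vi vj 0 n
        + vi n * vj n
          * ∑ r ∈ range (k + 1), dSKCoeff αi αj s r * dSKTerm (k + 1) v vi vj r (n + 1) := by
  have hshift : v (n + (k + 1 : ℕ)) ^ 2
        * ∑ r ∈ range k, dSKCoeff αi αj s r * dSKTerm (k + 1) v vi vj (r + 1) n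
      = vi n * vj n * ∑ r ∈ range k, dSKCoeff αi αj s r * dSKTerm (k + 1) v vi vj r (n + 1) := by
    rw [mul_sum, mul_sum]
    refine sum_congr rfl fun r hr => ?_
    have hr : r + 2 ≤ k + 1 := by simp only [mem_range] at hr; omega
    linear_combination dSKCoeff αi αj s r * dSKTerm_succ (k + 1) v vi vj hr n
  rw [sum_range_succ', sum_range_succ, dSKCoeff_of_lt s.succ_pos]
  simp only [dSKCoeff_succ_succ]
  linear_combination hshift

lemma dSKPoly_one_sub_dSKPoly_zero (n : ℤ) :
    v n * (dSKPoly (k + 1) αi αj v vi vj 1 n - dSKPoly (k + 1) αi αj v vi vj 0 n)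
      = (αi * αj - 1) * windowProd v (k + 1) n ^ 2 * (vi n - vj n) := by
  have hsum : ∀ s ≤ 1, ∑ r ∈ range (k + 1), dSKCoeff αi αj s r * dSKTerm (k + 1) v vi vj r n
      = dSKCoeff αi αj s 0 * dSKTerm (k + 1) v vi vj 0 n
        + ∑ r ∈ range k, dSKTerm (k + 1) v vi vj (r + 1) n := fun s hs => by
    rw [sum_range_succ', add_comm]
    congr 1
    exact sum_congr rfl fun r _ => by rw [dSKCoeff_of_le (by omega), one_mul]
  rw [dSKPoly, dSKPoly, hsum 1 le_rfl, hsum 0 zero_le_one, dSKCoeff_of_lt zero_lt_one,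
    dSKCoeff_of_le le_rfl]
  linear_combination (αi * αj - 1) * dSKTerm_zero v vi vj k n

end Polynomials

section Shift

variable {R : Type*} [CommRing R] [IsDomain R] (k : ℕ) {αi αj : R} {v vi vj : ℤ → R} {n : ℤ}

lemma dSKPoly_shift (hv : v n ≠ 0) (hqi : dSKQuad (k + 1) αi v vi n)
    (hqj : dSKQuad (k + 1) αj v vj n) (s : ℕ) :
    vi n * vj n * dSKPoly (k + 1) αi αj v vi vj s (n + 1)
        - v (n + (k + 1 : ℕ)) ^ 2 * dSKPoly (k + 1) αi αj v vi vj (s + 1) n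
      = (1 - dSKCoeff αi αj s k) * v (n + (k + 1 : ℕ)) * windowProd v (k + 1) n
          * (αi * windowProd vj (k + 1) n * (vi n - v (n + (k + 1 : ℕ)))
            - αj * windowProd vi (k + 1) n * (vj n - v (n + (k + 1 : ℕ)))) := by
  set γ := dSKCoeff αi αj s k
  set a := v n; set b := v (n + (k + 1 : ℕ)); set p := vi n; set q := vj n
  set p' := vi (n + (k + 1 : ℕ)); set q' := vj (n + (k + 1 : ℕ))
  set A := windowProd v (k + 1) n; set I := windowProd vi (k + 1) n
  set J := windowProd vj (k + 1) n
  set A' := windowProd v (k + 1) (n + 1); set I' := windowProd vi (k + 1) (n + 1)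
  set J' := windowProd vj (k + 1) (n + 1)
  have E1 : a * A' = A * b := mul_windowProd_add_one v (k + 1) n
  have E2 : p * I' = I * p' := mul_windowProd_add_one vi (k + 1) n
  have E3 : q * J' = J * q' := mul_windowProd_add_one vj (k + 1) n
  have E4 := dSKTerm_zero v vi vj k n
  have E5 := dSKTerm_last v vi vj k n
  have hsum := sum_dSKTerm_shift αi αj v vi vj k s n
  unfold dSKQuad at hqi hqj
  apply mul_left_cancel₀ hv
  rw [dSKPoly, dSKPoly]
  linear_combination αi * p * (a * A') * E3 + αi * p * J * q' * E1 - αj * q * (a * A') * E2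
    - αj * q * I * p' * E1 + γ * a * E5 - αi * αj * b ^ 2 * E4
    + (αi * p * b * A - γ * a * b * I) * hqj + (γ * a * b * J - αj * q * b * A) * hqi - a * hsum

lemma dSKPoly_succ_shift (hv : v n ≠ 0) (hqi : dSKQuad (k + 1) αi v vi n)
    (hqj : dSKQuad (k + 1) αj v vj n) {s : ℕ} (hs : s ≤ k) :
    v (n + (k + 1 : ℕ)) ^ 2 * dSKPoly (k + 1) αi αj v vi vj (s + 1) n
      = vi n * vj n * dSKPoly (k + 1) αi αj v vi vj s (n + 1) := by
  have h := dSKPoly_shift k hv hqi hqj s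
  rw [dSKCoeff_of_le hs] at h
  linear_combination -h

lemma dSKPoly_top_shift (hv : v n ≠ 0) (hqi : dSKQuad (k + 1) αi v vi n)
    (hqj : dSKQuad (k + 1) αj v vj n) :
    vi n * vj n * dSKPoly (k + 1) αi αj v vi vj (k + 1) (n + 1)
      = v (n + (k + 1 : ℕ)) ^ 2 * dSKPoly (k + 1) αi αj v vi vj (k + 1) n
        + (1 - αi * αj) * v (n + (k + 1 : ℕ)) * windowProd v (k + 1) n
          * (αi * windowProd vj (k + 1) n * (vi n - v (n + (k + 1 : ℕ)))
            - αj * windowProd vi (k + 1) n * (vj n - v (n + (k + 1 : ℕ)))) := by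
  have h := dSKPoly_shift k hv hqi hqj (k + 1)
  rw [dSKCoeff_of_lt k.lt_succ_self, dSKPoly_of_le _ _ _ _ _ _ (k + 1).le_succ] at h
  linear_combination h

theorem dSKPoly_bilinear (hv : v n ≠ 0) (hvm : v (n + (k + 1 : ℕ)) ≠ 0)
    (hqi : dSKQuad (k + 1) αi v vi n) (hqj : dSKQuad (k + 1) αj v vj n) {s : ℕ}
    (hs : s + 2 ≤ k + 1) :
    dSKPoly (k + 1) αi αj v vi vj (s + 2) n * dSKPoly (k + 1) αi αj v vi vj s (n + 1)
      = dSKPoly (k + 1) αi αj v vi vj (s + 1) n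
        * dSKPoly (k + 1) αi αj v vi vj (s + 1) (n + 1) := by
  set P := dSKPoly (k + 1) αi αj v vi vj
  apply mul_left_cancel₀ (pow_ne_zero 2 hvm)
  linear_combination P s (n + 1) * dSKPoly_succ_shift k hv hqi hqj (s := s + 1) (by omega)
    - P (s + 1) (n + 1) * dSKPoly_succ_shift k hv hqi hqj (s := s) (by omega)

end Shift

section Ratios

variable {K : Type*} [Field K]

lemma prod_range_mul_eq_of_ratio {P x y : ℕ → K} {j : ℕ} (hP : ∀ s < j, P s ≠ 0)
    (h : ∀ s < j, y s = x s * P (s + 1) / P s) :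
    (∏ s ∈ range j, y s) * P 0 = (∏ s ∈ range j, x s) * P j := by
  induction j with
  | zero => simp
  | succ j ih =>
    have hj : y j * P j = x j * P (j + 1) := by
      rw [h j j.lt_succ_self, div_mul_cancel₀ _ (hP j j.lt_succ_self)]
    have ih := ih (fun s hs => hP s (by omega)) (fun s hs => h s (by omega))
    rw [prod_range_succ, prod_range_succ]
    linear_combination y j * ih + (∏ s ∈ range j, x s) * hj

lemma eq_mul_div_of_bilinear {m : ℕ} {P : ℕ → ℤ → K} {v w : ℤ → K}
    (hP : ∀ s ≤ m, ∀ n, P s n ≠ 0)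
    (hbil : ∀ n s, s + 2 ≤ m → P (s + 2) n * P s (n + 1) = P (s + 1) n * P (s + 1) (n + 1))
    (hw : ∀ n, w n = v n * P 1 n / P 0 n) :
    ∀ s < m, ∀ n, w (n + s) = v (n + s) * P (s + 1) n / P s n := by
  intro s
  induction s with
  | zero => simpa using fun _ => hw
  | succ s ih =>
    intro hs n
    have hratio : P (s + 1) (n + 1) / P s (n + 1) = P (s + 2) n / P (s + 1) n := by
      rw [div_eq_div_iff (hP s (by omega) (n + 1)) (hP (s + 1) (by omega) n)]
      linear_combination -hbil n s (by omega)
    have e : n + ((s + 1 : ℕ) : ℤ) = n + 1 + s := by push_cast; ring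
    rw [e, ih (by omega) (n + 1), mul_div_assoc, mul_div_assoc, hratio]

end Ratios

section Superposition

variable {K : Type*} [Field K] (k : ℕ) {αi αj : K} {v vi vj : ℤ → K} {n : ℤ}

theorem dSKQuad_superposition (hv : v n ≠ 0) (hvi : vi n ≠ 0) (hvj : vj n ≠ 0)
    (hqi : dSKQuad (k + 1) αi v vi n) (hqj : dSKQuad (k + 1) αj v vj n)
    (hP : ∀ s ≤ k + 1, ∀ n, dSKPoly (k + 1) αi αj v vi vj s n ≠ 0) {w : ℤ → K}
    (hw : ∀ s < k + 1, ∀ n,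
      w (n + s) = v (n + s) * dSKPoly (k + 1) αi αj v vi vj (s + 1) n
        / dSKPoly (k + 1) αi αj v vi vj s n) :
    dSKQuad (k + 1) αi vj w n := by
  have htop := dSKPoly_top_shift k hv hqi hqj
  have hlast := dSKPoly_succ_shift k hv hqi hqj le_rfl
  have hbot := dSKPoly_sub_mul_dSKPoly_zero (k + 1) αi αj v vi vj n
  have hone := dSKPoly_one_sub_dSKPoly_zero αi αj v vi vj k n
  set P := dSKPoly (k + 1) αi αj v vi vj
  set b := v (n + (k + 1 : ℕ)); set q' := vj (n + (k + 1 : ℕ))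
  set A := windowProd v (k + 1) n; set J := windowProd vj (k + 1) n
  have hw_prod : windowProd w (k + 1) n = A * P (k + 1) n / P 0 n := by
    rw [eq_div_iff (hP 0 (by omega) n)]
    exact prod_range_mul_eq_of_ratio (P := fun s => P s n) (fun s hs => hP s hs.le n)
      fun s hs => hw s hs n
  have hw_zero : w n = v n * P 1 n / P 0 n := by simpa using hw 0 (by omega) n
  have hw_top : w (n + (k + 1 : ℕ)) = b * P (k + 1) (n + 1) / P k (n + 1) := by
    have e : n + 1 + (k : ℤ) = n + (k + 1 : ℕ) := by push_cast; ring
    simpa only [e] using hw k (by omega) (n + 1)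
  have key : vj n * (vi n * P (k + 1) (n + 1) - b * P (k + 1) n) * A
      = αi * b * (q' * P 0 n - v n * P 1 n) * J := by
    unfold dSKQuad at hqj
    linear_combination A * htop - αi * b * P 0 n * hqj + αi * b * J * hone
      + b * A * (b - vj n) * hbot
  unfold dSKQuad
  rw [hw_top, hw_zero, hw_prod]
  field_simp [hP 0 (by omega) n, hP k (by omega) (n + 1)]
  apply mul_left_cancel₀ (mul_ne_zero hvi hvj)
  linear_combination b * P (k + 1) n * key
    + (vj n * A * P (k + 1) n + αi * (q' * P 0 n - v n * P 1 n) * J) * hlast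

end Superposition

theorem potential_dSK_superposition_general
    (m : ℕ) (hm : 1 ≤ m) (αi αj : ℂ)
    (v vi vj : ℤ → ℂ)
    (hv0 : ∀ n : ℤ, v n ≠ 0) (hvi0 : ∀ n : ℤ, vi n ≠ 0) (hvj0 : ∀ n : ℤ, vj n ≠ 0)
    (hqi : ∀ n : ℤ,
      (vi (n + m) - v n) * ∏ s ∈ Finset.range m, vi (n + s)
        = αi * (v (n + m) - vi n) * ∏ s ∈ Finset.range m, v (n + s))
    (hqj : ∀ n : ℤ,
      (vj (n + m) - v n) * ∏ s ∈ Finset.range m, vj (n + s)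
        = αj * (v (n + m) - vj n) * ∏ s ∈ Finset.range m, v (n + s))
    (P : ℕ → ℤ → ℂ)
    (hP : ∀ (s : ℕ) (n : ℤ),
      P s n =
        (αi * (∏ r ∈ Finset.range m, vj (n + r))
          - αj * ∏ r ∈ Finset.range m, vi (n + r)) * ∏ r ∈ Finset.range m, v (n + r)
        + ∑ r ∈ Finset.range m,
            (if s ≤ r then 1 else αi * αj)
              * (∏ t ∈ Finset.Ico (r + 1) m, v (n + t)) ^ 2
              * v (n + r) * (vi (n + r) - vj (n + r))
              * (∏ t ∈ Finset.range r, vi (n + t))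
              * ∏ t ∈ Finset.range r, vj (n + t))
    (hP0 : ∀ (s : ℕ), s ≤ m → ∀ n : ℤ, P s n ≠ 0)
    (vij : ℤ → ℂ)
    (hvij : ∀ n : ℤ, vij n = v n * P 1 n / P 0 n) :
    (∀ (n : ℤ) (s : ℕ), s + 2 ≤ m →
      P (s + 2) n * P s (n + 1) = P (s + 1) n * P (s + 1) (n + 1))
    ∧ (∀ (n : ℤ) (s : ℕ), s < m →
      vij (n + s) = v (n + s) * P (s + 1) n / P s n)
    ∧ (∀ n : ℤ,
      (vij (n + m) - vj n) * ∏ s ∈ Finset.range m, vij (n + s)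
        = αi * (vj (n + m) - vij n) * ∏ s ∈ Finset.range m, vj (n + s))
    ∧ (∀ n : ℤ,
      (vij (n + m) - vi n) * ∏ s ∈ Finset.range m, vij (n + s)
        = αj * (vi (n + m) - vij n) * ∏ s ∈ Finset.range m, vi (n + s)) := by
  obtain ⟨k, rfl⟩ : ∃ k, m = k + 1 := ⟨m - 1, by omega⟩
  obtain rfl : P = dSKPoly (k + 1) αi αj v vi vj := by
    ext s n
    rw [hP, dSKPoly]
    exact congrArg _ (sum_congr rfl fun r _ => by simp only [dSKCoeff, dSKTerm, windowProd]; ring)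
  have hbil : ∀ n s, s + 2 ≤ k + 1 → _ := fun n s hs =>
    dSKPoly_bilinear k (hv0 n) (hv0 _) (hqi n) (hqj n) hs
  have hratio := eq_mul_div_of_bilinear hP0 hbil hvij
  have hswap := dSKPoly_swap (k + 1) αi αj v vi vj
  refine ⟨hbil, fun n s hs => hratio s hs n, fun n => ?_, fun n => ?_⟩
  · exact dSKQuad_superposition k (hv0 n) (hvi0 n) (hvj0 n) (hqi n) (hqj n) hP0 hratio
  · refine dSKQuad_superposition k (hv0 n) (hvj0 n) (hvi0 n) (hqj n) (hqi n)
      (fun s hs n => ?_) (fun s hs n => ?_)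
    · simpa only [hswap, neg_ne_zero] using hP0 s hs n
    · simpa only [hswap, mul_neg, neg_div_neg_eq] using hratio s hs n

/-- Core of the multidimensional consistency theorem for the Bäcklund transformation of
the potential form of the discretization of the Sawada–Kotera equation: the
superposition formula `v^{ij}_s = v_s P_{s+1}/P_s` is well defined and `v^{ij}`
satisfies both shifted m-quad-equations. -/
theorem potential_dSK_superposition
    (m : ℕ) (hm : 1 ≤ m) (αi αj : ℂ) (hαα : αi ≠ αj)
    (v vi vj : ℤ → ℂ)
    (hv0 : ∀ n : ℤ, v n ≠ 0) (hvi0 : ∀ n : ℤ, vi n ≠ 0) (hvj0 : ∀ n : ℤ, vj n ≠ 0)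
    (hqi : ∀ n : ℤ,
      (vi (n + m) - v n) * ∏ s ∈ Finset.range m, vi (n + s)
        = αi * (v (n + m) - vi n) * ∏ s ∈ Finset.range m, v (n + s))
    (hqj : ∀ n : ℤ,
      (vj (n + m) - v n) * ∏ s ∈ Finset.range m, vj (n + s)
        = αj * (v (n + m) - vj n) * ∏ s ∈ Finset.range m, v (n + s))
    (P : ℕ → ℤ → ℂ)
    (hP : ∀ (s : ℕ) (n : ℤ),
      P s n =
        (αi * (∏ r ∈ Finset.range m, vj (n + r))
          - αj * ∏ r ∈ Finset.range m, vi (n + r)) * ∏ r ∈ Finset.range m, v (n + r)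
        + ∑ r ∈ Finset.range m,
            (if s ≤ r then 1 else αi * αj)
              * (∏ t ∈ Finset.Ico (r + 1) m, v (n + t)) ^ 2
              * v (n + r) * (vi (n + r) - vj (n + r))
              * (∏ t ∈ Finset.range r, vi (n + t))
              * ∏ t ∈ Finset.range r, vj (n + t))
    (hP0 : ∀ (s : ℕ), s ≤ m → ∀ n : ℤ, P s n ≠ 0)
    (vij : ℤ → ℂ)
    (hvij : ∀ n : ℤ, vij n = v n * P 1 n / P 0 n) :
    (∀ (n : ℤ) (s : ℕ), s + 2 ≤ m →
      P (s + 2) n * P s (n + 1) = P (s + 1) n * P (s + 1) (n + 1))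
    ∧ (∀ (n : ℤ) (s : ℕ), s < m →
      vij (n + s) = v (n + s) * P (s + 1) n / P s n)
    ∧ (∀ n : ℤ,
      (vij (n + m) - vj n) * ∏ s ∈ Finset.range m, vij (n + s)
        = αi * (vj (n + m) - vij n) * ∏ s ∈ Finset.range m, vj (n + s))
    ∧ (∀ n : ℤ,
      (vij (n + m) - vi n) * ∏ s ∈ Finset.range m, vij (n + s)
        = αj * (vi (n + m) - vij n) * ∏ s ∈ Finset.range m, vi (n + s)) :=
  potential_dSK_superposition_general m hm αi αj v vi vj hv0 hvi0 hvj0 hqi hqj P hP hP0 vij hvij
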